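/- Let g₁, g₂ be nonzero, linearly independent vectors and define g_ConFIG = (⟪g₁,g_v⟫ + ⟪g₂,g_v⟫)·g_v with g_v = U(U(O(g₁,g₂)) + U(O(g₂,g₁))). Then ‖g_ConFIG‖ = √((1 + S_c(g₁,g₂))/2)·(‖g₁‖ + ‖g₂‖). -/

import Mathlib

/-!
Let `θ` be the angle between `g₁` and `g₂`. The unit rejections `e₁ = U (O g₁ g₂)` and
`e₂ = U (O g₂ g₁)` satisfy `⟪g₁, e₁⟫ = 0`, `⟪g₂, e₁⟫ = ‖g₂‖ sin θ` (and symmetrically) and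
`⟪e₁, e₂⟫ = -cos θ`, so `‖e₁ + e₂‖ = √(2 - 2 cos θ)`. Hence `g_v = U (e₁ + e₂)` is a unit vector
with `⟪gᵢ, g_v⟫ = ‖gᵢ‖ sin θ / √(2 - 2 cos θ) = ‖gᵢ‖ √((1 + cos θ) / 2)` for both `i`.
-/

open scoped RealInnerProductSpace

open InnerProductGeometry NormedSpace Real

noncomputable section

variable {E : Type*} [NormedAddCommGroup E] [InnerProductSpace ℝ E]

def rejection (u v : E) : E := v - (⟪u, v⟫ / ‖u‖ ^ 2) • u

def conflictFreeDirection (u v : E) : E :=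
  normalize (normalize (rejection u v) + normalize (rejection v u))

lemma inner_rejection_self_left (u v : E) : ⟪u, rejection u v⟫ = 0 := by
  rcases eq_or_ne u 0 with rfl | hu
  · simp
  rw [rejection, inner_sub_right, real_inner_smul_right, real_inner_self_eq_norm_sq]
  field_simp
  ring

lemma inner_rejection_right (u v : E) : ⟪v, rejection u v⟫ = ‖rejection u v‖ ^ 2 := by
  rw [← real_inner_self_eq_norm_sq]
  nth_rw 2 [rejection]
  rw [inner_sub_left, real_inner_smul_left, inner_rejection_self_left]
  ring

lemma norm_rejection (u v : E) : ‖rejection u v‖ = ‖v‖ * sin (angle u v) := by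
  have hsq : ‖rejection u v‖ ^ 2 = (‖v‖ * sin (angle u v)) ^ 2 := by
    rw [← inner_rejection_right, rejection, inner_sub_right, real_inner_smul_right,
      real_inner_self_eq_norm_sq, mul_pow, sin_sq, cos_angle, real_inner_comm u v]
    rcases eq_or_ne u 0 with rfl | hu
    · simp
    rcases eq_or_ne v 0 with rfl | hv
    · simp
    field_simp
  exact (pow_left_inj₀ (norm_nonneg _)
    (mul_nonneg (norm_nonneg _) (sin_angle_nonneg u v)) two_ne_zero).1 hsq

lemma inner_rejection_rejection (u v : E) :
    ⟪rejection u v, rejection v u⟫ = -(⟪v, u⟫ / ‖v‖ ^ 2) * ‖rejection u v‖ ^ 2 := by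
  nth_rw 2 [rejection]
  rw [inner_sub_right, real_inner_smul_right, real_inner_comm u, inner_rejection_self_left,
    real_inner_comm v, inner_rejection_right]
  ring

lemma sin_angle_pos_of_linearIndependent {u v : E} (h : LinearIndependent ℝ ![u, v]) :
    0 < sin (angle u v) := by
  refine (sin_angle_nonneg u v).lt_of_ne' fun hsin => ?_
  obtain ⟨-, r, -, rfl⟩ : u ≠ 0 ∧ ∃ r : ℝ, r ≠ 0 ∧ v = r • u := by
    rw [← abs_real_inner_div_norm_mul_norm_eq_one_iff, ← cos_angle, ← abs_one,
      ← sq_eq_sq_iff_abs_eq_abs, one_pow, cos_sq', hsin]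
    norm_num
  have := (LinearIndependent.pair_iff.1 h r (-1) (by simp)).2
  norm_num at this

lemma inner_normalize_rejection_right (u v : E) :
    ⟪v, normalize (rejection u v)⟫ = ‖v‖ * sin (angle u v) := by
  rw [NormedSpace.normalize, real_inner_smul_right, inner_rejection_right, ← norm_rejection]
  rcases eq_or_ne ‖rejection u v‖ 0 with h | h
  · simp [h]
  · field_simp

lemma inner_normalize_rejection_normalize_rejection {u v : E}
    (h : LinearIndependent ℝ ![u, v]) :
    ⟪normalize (rejection u v), normalize (rejection v u)⟫ = -cos (angle u v) := by
  have hu : u ≠ 0 := by simpa using h.ne_zero 0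
  have hv : v ≠ 0 := by simpa using h.ne_zero 1
  have hs := sin_angle_pos_of_linearIndependent h
  rw [NormedSpace.normalize, NormedSpace.normalize, real_inner_smul_left, real_inner_smul_right,
    inner_rejection_rejection, norm_rejection, norm_rejection, angle_comm v, cos_angle,
    real_inner_comm]
  have := norm_pos_iff.2 hu
  have := norm_pos_iff.2 hv
  field_simp

lemma rejection_ne_zero {u v : E} (h : LinearIndependent ℝ ![u, v]) : rejection u v ≠ 0 := by
  have hv : v ≠ 0 := by simpa using h.ne_zero 1
  rw [← norm_ne_zero_iff, norm_rejection]
  exact mul_ne_zero (norm_ne_zero_iff.2 hv) (sin_angle_pos_of_linearIndependent h).ne'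

lemma norm_normalize_rejection_add {u v : E} (h : LinearIndependent ℝ ![u, v]) :
    ‖normalize (rejection u v) + normalize (rejection v u)‖ = √(2 - 2 * cos (angle u v)) := by
  rw [← sqrt_sq (norm_nonneg _), norm_add_sq_real,
    NormedSpace.norm_normalize (rejection_ne_zero h),
    NormedSpace.norm_normalize (rejection_ne_zero (LinearIndependent.pair_symm_iff.1 h)),
    inner_normalize_rejection_normalize_rejection h]
  ring_nf

lemma Real.cos_lt_one_of_sin_pos {x : ℝ} (hx : 0 < sin x) : cos x < 1 := by
  nlinarith [sin_sq_add_cos_sq x]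

lemma Real.sin_div_sqrt_two_sub_two_mul_cos {x : ℝ} (hx : 0 < sin x) :
    sin x / √(2 - 2 * cos x) = √((1 + cos x) / 2) := by
  have hc := cos_lt_one_of_sin_pos hx
  rw [← sqrt_sq hx.le, ← sqrt_div' _ (by linarith)]
  congr 1
  rw [sin_sq, div_eq_div_iff (by linarith) two_ne_zero]
  ring

lemma conflictFreeDirection_comm (u v : E) :
    conflictFreeDirection u v = conflictFreeDirection v u := by
  rw [conflictFreeDirection, conflictFreeDirection, add_comm]

lemma inner_conflictFreeDirection_left {u v : E} (h : LinearIndependent ℝ ![u, v]) :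
    ⟪u, conflictFreeDirection u v⟫ = ‖u‖ * √((1 + cos (angle u v)) / 2) := by
  rw [conflictFreeDirection, NormedSpace.normalize, real_inner_smul_right,
    norm_normalize_rejection_add h, inner_add_right, NormedSpace.normalize, real_inner_smul_right,
    inner_rejection_self_left, inner_normalize_rejection_right, angle_comm v u,
    ← sin_div_sqrt_two_sub_two_mul_cos (sin_angle_pos_of_linearIndependent h)]
  ring

lemma norm_conflictFreeDirection {u v : E} (h : LinearIndependent ℝ ![u, v]) :
    ‖conflictFreeDirection u v‖ = 1 := by
  have hc := cos_lt_one_of_sin_pos (sin_angle_pos_of_linearIndependent h)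
  refine NormedSpace.norm_normalize fun h0 => ?_
  have := norm_normalize_rejection_add h
  rw [h0, norm_zero, eq_comm, sqrt_eq_zero'] at this
  linarith

end

theorem stmt_17_general {E : Type*} [NormedAddCommGroup E] [InnerProductSpace ℝ E]
    (g₁ g₂ : E)
    (hli : LinearIndependent ℝ ![g₁, g₂]) :
    let O : E → E → E := fun u v => v - (⟪u, v⟫ / ‖u‖ ^ 2) • u
    let U : E → E := fun v => ‖v‖⁻¹ • v
    let gv : E := U (U (O g₁ g₂) + U (O g₂ g₁))
    let gConFIG : E := (⟪g₁, gv⟫ + ⟪g₂, gv⟫) • gv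
    ‖gConFIG‖ = Real.sqrt ((1 + ⟪g₁, g₂⟫ / (‖g₁‖ * ‖g₂‖)) / 2) * (‖g₁‖ + ‖g₂‖) := by
  intro O U gv gConFIG
  change ‖(⟪g₁, conflictFreeDirection g₁ g₂⟫ + ⟪g₂, conflictFreeDirection g₁ g₂⟫) •
    conflictFreeDirection g₁ g₂‖ = _
  rw [norm_smul, norm_conflictFreeDirection hli, inner_conflictFreeDirection_left hli,
    conflictFreeDirection_comm,
    inner_conflictFreeDirection_left (LinearIndependent.pair_symm_iff.1 hli),
    angle_comm g₂ g₁, cos_angle, norm_of_nonneg (by positivity)]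
  ring

theorem stmt_17 {E : Type*} [NormedAddCommGroup E] [InnerProductSpace ℝ E]
    (g₁ g₂ : E) (h₁ : g₁ ≠ 0) (h₂ : g₂ ≠ 0)
    (hli : LinearIndependent ℝ ![g₁, g₂]) :
    let O : E → E → E := fun u v => v - (⟪u, v⟫ / ‖u‖ ^ 2) • u
    let U : E → E := fun v => ‖v‖⁻¹ • v
    let gv : E := U (U (O g₁ g₂) + U (O g₂ g₁))
    let gConFIG : E := (⟪g₁, gv⟫ + ⟪g₂, gv⟫) • gv
    ‖gConFIG‖ = Real.sqrt ((1 + ⟪g₁, g₂⟫ / (‖g₁‖ * ‖g₂‖)) / 2) * (‖g₁‖ + ‖g₂‖) :=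
  stmt_17_general g₁ g₂ hli
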